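/- arXiv:1411.5276 — 7 statements merged into one kernel-verified Lean document; each statement's English description precedes it below -/
import Mathlib

section
/- First characterization of 𝓜: Let U : (0,∞) → (0,∞) be measurable and bounded on finite intervals. Then U ∈ 𝓜 with index ρ_U = -τ if and only if lim_{x→∞} log(U(x))/log(x) = -τ. -/
open Filter Real MeasureTheory Set

/-- `U ∈ 𝓜` with index `ρ`: positive and measurable on `(0,∞)`, bounded on finite
intervals, and for all `ε > 0`, `U(x)/x^(ρ+ε) → 0` and `U(x)/x^(ρ-ε) → ∞`. -/
def MemM (U : ℝ → ℝ) (ρ : ℝ) : Prop :=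
  (∀ x, 0 < x → 0 < U x) ∧ Measurable U ∧
  (∀ b, 0 < b → ∃ C, ∀ x, 0 < x → x ≤ b → U x ≤ C) ∧
  ∀ ε : ℝ, 0 < ε →
    Tendsto (fun x => U x / x ^ (ρ + ε)) atTop (nhds 0) ∧
    Tendsto (fun x => U x / x ^ (ρ - ε)) atTop atTop

theorem memM_iff_log_limit (U : ℝ → ℝ) (τ : ℝ)
    (hpos : ∀ x, 0 < x → 0 < U x) (hmeas : Measurable U)
    (hbdd : ∀ b, 0 < b → ∃ C, ∀ x, 0 < x → x ≤ b → U x ≤ C) :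
    MemM U (-τ) ↔
      Tendsto (fun x => Real.log (U x) / Real.log x) atTop (nhds (-τ)) := by
  constructor
  · rintro ⟨-, -, -, h⟩
    rw [Metric.tendsto_atTop]
    intro ε hε
    obtain ⟨h1, h2⟩ := h (ε / 2) (half_pos hε)
    have e1 : ∀ᶠ x in atTop, U x / x ^ (-τ + ε / 2) < 1 :=
      h1.eventually_lt_const one_pos
    have e2 : ∀ᶠ x in atTop, 1 < U x / x ^ (-τ - ε / 2) :=
      h2.eventually_gt_atTop 1
    obtain ⟨N, hN⟩ := (e1.and (e2.and (eventually_gt_atTop 1))).exists_forall_of_atTop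
    refine ⟨N, fun x hx => ?_⟩
    obtain ⟨hx1, hx2, hx3⟩ := hN x hx
    have hx0 : (0:ℝ) < x := lt_trans one_pos hx3
    have hL : 0 < Real.log x := Real.log_pos hx3
    have hU := hpos x hx0
    have hub : Real.log (U x) < (-τ + ε / 2) * Real.log x := by
      have : U x < x ^ (-τ + ε / 2) :=
        (div_lt_one (Real.rpow_pos_of_pos hx0 _)).mp hx1
      calc Real.log (U x) < Real.log (x ^ (-τ + ε / 2)) := Real.log_lt_log hU this
        _ = (-τ + ε / 2) * Real.log x := Real.log_rpow hx0 _
    have hlb : (-τ - ε / 2) * Real.log x < Real.log (U x) := by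
      have : x ^ (-τ - ε / 2) < U x := by
        have := (one_lt_div (Real.rpow_pos_of_pos hx0 _)).mp hx2
        exact this
      calc (-τ - ε / 2) * Real.log x = Real.log (x ^ (-τ - ε / 2)) :=
            (Real.log_rpow hx0 _).symm
        _ < Real.log (U x) := Real.log_lt_log (Real.rpow_pos_of_pos hx0 _) this
    rw [Real.dist_eq, abs_lt]
    constructor
    · have := (lt_div_iff₀ hL).mpr hlb
      linarith
    · have := (div_lt_iff₀ hL).mpr hub
      linarith
  · intro h
    refine ⟨hpos, hmeas, hbdd, fun ε hε => ?_⟩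
    have hfac1 : Tendsto (fun x => Real.log (U x) / Real.log x - (-τ + ε)) atTop
        (nhds (-ε)) := by
      have := h.sub_const (-τ + ε)
      convert this using 2
      ring
    have hfac2 : Tendsto (fun x => Real.log (U x) / Real.log x - (-τ - ε)) atTop
        (nhds ε) := by
      have := h.sub_const (-τ - ε)
      convert this using 2
      ring
    have hlogx : Tendsto Real.log atTop atTop := Real.tendsto_log_atTop
    have hb1 : Tendsto (fun x => (Real.log (U x) / Real.log x - (-τ + ε)) * Real.log x)
        atTop atBot := hfac1.neg_mul_atTop (by linarith) hlogx
    have hb2 : Tendsto (fun x => (Real.log (U x) / Real.log x - (-τ - ε)) * Real.log x)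
        atTop atTop := hfac2.pos_mul_atTop hε hlogx
    have key : ∀ ρ : ℝ, ∀ᶠ x in atTop,
        Real.exp ((Real.log (U x) / Real.log x - ρ) * Real.log x) = U x / x ^ ρ := by
      intro ρ
      filter_upwards [eventually_gt_atTop 1] with x hx
      have hx0 : (0:ℝ) < x := lt_trans one_pos hx
      have hL : Real.log x ≠ 0 := ne_of_gt (Real.log_pos hx)
      rw [sub_mul, div_mul_cancel₀ _ hL, Real.exp_sub, Real.exp_log (hpos x hx0),
        Real.rpow_def_of_pos hx0, mul_comm]
    constructor
    · exact (Real.tendsto_exp_atBot.comp hb1).congr' (key (-τ + ε))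
    · exact (Real.tendsto_exp_atTop.comp hb2).congr' (key (-τ - ε))
end

section
/- Second characterization of 𝓜 (necessity): If U ∈ 𝓜 with index ρ_U, then κ_U = -ρ_U, where κ_U = sup{ r ∈ ℝ : ∫_1^∞ x^{r-1} U(x) dx < ∞ }. -/
/-!
For every `ε > 0`, eventually `x ^ (ρ - ε) ≤ U x ≤ x ^ (ρ + ε)`, so at infinity the integrand
`x ^ (r - 1) * U x` is squeezed between `x ^ (r - 1 + ρ ∓ ε)`, and `x ^ s` is integrable at
infinity iff `s < -1`. On bounded pieces of `[1, ∞)` the integrand is integrable because `U` is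
bounded there. Hence the set of admissible `r` lies between `Iio (-ρ)` and `Iic (-ρ)`.
-/

open Filter Real MeasureTheory Set Asymptotics

namespace MemM

variable {U : ℝ → ℝ} {ρ ε : ℝ}

lemma eventually_le_rpow (hU : MemM U ρ) (hε : 0 < ε) :
    ∀ᶠ x in atTop, U x ≤ x ^ (ρ + ε) := by
  filter_upwards [((hU.2.2.2 ε hε).1.eventually_le_const zero_lt_one), eventually_gt_atTop 0]
    with x hx hx0
  rwa [div_le_iff₀ (rpow_pos_of_pos hx0 _), one_mul] at hx

lemma eventually_rpow_le (hU : MemM U ρ) (hε : 0 < ε) :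
    ∀ᶠ x in atTop, x ^ (ρ - ε) ≤ U x := by
  filter_upwards [((hU.2.2.2 ε hε).2.eventually_ge_atTop 1), eventually_gt_atTop 0]
    with x hx hx0
  rwa [le_div_iff₀ (rpow_pos_of_pos hx0 _), one_mul] at hx

lemma locallyIntegrableOn_Ioi (hU : MemM U ρ) : LocallyIntegrableOn U (Ioi 0) := by
  obtain ⟨hpos, hmeas, hbdd, -⟩ := hU
  rw [locallyIntegrableOn_iff isOpen_Ioi.isLocallyClosed]
  intro k hk hkc
  obtain ⟨b, hb⟩ := hkc.bddAbove
  obtain ⟨C, hC⟩ := hbdd (max b 1) (by positivity)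
  refine .of_bound hkc.measure_lt_top hmeas.aestronglyMeasurable C ?_
  filter_upwards [ae_restrict_mem hkc.measurableSet] with x hx
  rw [norm_of_nonneg (hpos x (hk hx)).le]
  exact hC x (hk hx) ((hb hx).trans (le_max_left _ _))

lemma rpow_mul_isBigO_rpow (hU : MemM U ρ) (hε : 0 < ε) (r : ℝ) :
    (fun x => x ^ (r - 1) * U x) =O[atTop] fun x => x ^ (r - 1 + (ρ + ε)) := by
  refine IsBigO.of_bound 1 ?_
  filter_upwards [hU.eventually_le_rpow hε, eventually_gt_atTop 0] with x hx hx0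
  rw [one_mul, norm_of_nonneg (mul_pos (rpow_pos_of_pos hx0 _) (hU.1 x hx0)).le,
    norm_of_nonneg (rpow_pos_of_pos hx0 _).le, rpow_add hx0]
  exact mul_le_mul_of_nonneg_left hx (rpow_pos_of_pos hx0 _).le

lemma rpow_isBigO_rpow_mul (hU : MemM U ρ) (hε : 0 < ε) (r : ℝ) :
    (fun x => x ^ (r - 1 + (ρ - ε))) =O[atTop] fun x => x ^ (r - 1) * U x := by
  refine IsBigO.of_bound 1 ?_
  filter_upwards [hU.eventually_rpow_le hε, eventually_gt_atTop 0] with x hx hx0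
  rw [one_mul, norm_of_nonneg (mul_pos (rpow_pos_of_pos hx0 _) (hU.1 x hx0)).le,
    norm_of_nonneg (rpow_pos_of_pos hx0 _).le, rpow_add hx0]
  exact mul_le_mul_of_nonneg_left hx (rpow_pos_of_pos hx0 _).le

lemma integrableOn_rpow_mul (hU : MemM U ρ) {r : ℝ} (hr : r < -ρ) :
    IntegrableOn (fun x => x ^ (r - 1) * U x) (Ioi 1) := by
  have hloc : LocallyIntegrableOn (fun x => x ^ (r - 1) * U x) (Ici 1) :=
    (hU.locallyIntegrableOn_Ioi.mono_set fun x hx => zero_lt_one.trans_le hx).continuousOn_mul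
      (continuousOn_id.rpow_const fun x hx => Or.inl (zero_lt_one.trans_le hx).ne')
      isClosed_Ici.isLocallyClosed
  have hε : 0 < (-ρ - r) / 2 := by linarith
  have hint : IntegrableAtFilter (fun x : ℝ => x ^ (r - 1 + (ρ + (-ρ - r) / 2))) atTop :=
    integrableAtFilter_rpow_atTop_iff.mpr (by linarith)
  refine (integrableOn_Ici_iff_integrableAtFilter_atTop.mpr ⟨?_, hloc⟩).mono_set
    Ioi_subset_Ici_self
  exact (hU.rpow_mul_isBigO_rpow hε r).integrableAtFilter
    ⟨Ici 1, Ici_mem_atTop 1, hloc.aestronglyMeasurable⟩ hint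

lemma le_neg_of_integrableOn_rpow_mul (hU : MemM U ρ) {r : ℝ}
    (hr : IntegrableOn (fun x => x ^ (r - 1) * U x) (Ioi 1)) : r ≤ -ρ := by
  refine le_of_forall_pos_lt_add fun ε hε => ?_
  have hmeas : Measurable fun x : ℝ => x ^ (r - 1 + (ρ - ε)) := by fun_prop
  have hint : IntegrableAtFilter (fun x : ℝ => x ^ (r - 1 + (ρ - ε))) atTop :=
    (hU.rpow_isBigO_rpow_mul hε r).integrableAtFilter
      hmeas.aestronglyMeasurable.stronglyMeasurableAtFilter
      ⟨Ioi 1, Ioi_mem_atTop 1, hr⟩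
  have := integrableAtFilter_rpow_atTop_iff.mp hint
  linarith

end MemM

theorem memM_index_isLUB (U : ℝ → ℝ) (ρ : ℝ) (hU : MemM U ρ) :
    IsLUB {r : ℝ | IntegrableOn (fun x => x ^ (r - 1) * U x) (Set.Ioi 1)} (-ρ) :=
  ⟨fun _ hr => hU.le_neg_of_integrableOn_rpow_mul hr,
    fun _ hb => isLUB_Iio.2 fun _ hr => hb (hU.integrableOn_rpow_mul hr)⟩
end

section
/- Representation theorem of Karamata type (converse direction): Let U : (0,∞) → (0,∞) be measurable and bounded on finite intervals. Suppose there exist b > 1 and measurable functions α, β, ε with α(x)/log(x) → 0, ε(x) → 1, β(x) → ρ as x → ∞, such that U(x) = exp(α(x) + ε(x)·∫_b^x β(t)/t dt) for all x ≥ b. Then U ∈ 𝓜 with index ρ. -/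
open Filter Real MeasureTheory Set

lemma div_inv_intervalIntegrable {β : ℝ → ℝ} {a c : ℝ} (ha : 0 < a)
    (hac : a ≤ c) (h : IntervalIntegrable β volume a c) :
    IntervalIntegrable (fun t => β t / t) volume a c := by
  have hcont : ContinuousOn (fun t : ℝ => t⁻¹) (Set.uIcc a c) := by
    apply ContinuousOn.inv₀ continuousOn_id
    intro t ht
    rw [Set.uIcc_of_le hac] at ht
    exact ne_of_gt (lt_of_lt_of_le ha ht.1)
  simpa [div_eq_mul_inv] using h.mul_continuousOn hcont

lemma karamata_log_integral {β : ℝ → ℝ} {ρ b : ℝ} (hb : 1 < b)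
    (hβ : Tendsto β atTop (nhds ρ))
    (hβint : ∀ x, b ≤ x → IntervalIntegrable β volume b x) :
    Tendsto (fun x => (∫ t in b..x, β t / t) / Real.log x) atTop (nhds ρ) := by
  rw [Metric.tendsto_nhds]
  intro δ hδ
  -- choose X ≥ b with |β t - ρ| ≤ δ/2 for t ≥ X
  obtain ⟨X₀, hX₀⟩ := eventually_atTop.mp (hβ.eventually (Metric.closedBall_mem_nhds ρ (by positivity : (0:ℝ) < δ/2)))
  set X : ℝ := max X₀ b with hXdef
  have hbX : b ≤ X := le_max_right _ _
  have hX1 : 1 < X := lt_of_lt_of_le hb hbX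
  have hβsmall : ∀ t, X ≤ t → |β t - ρ| ≤ δ/2 := by
    intro t ht
    have := hX₀ t (le_trans (le_max_left _ _) ht)
    simpa [Real.dist_eq] using this
  set C : ℝ := |∫ t in b..X, β t / t| + |ρ| * Real.log X with hC
  filter_upwards [eventually_ge_atTop X, eventually_gt_atTop (max 1 (Real.exp (C / (δ/2))))] with x hXx hx1
  have hx1' : 1 < x := lt_of_le_of_lt (le_max_left _ _) hx1
  have hlogx : 0 < Real.log x := Real.log_pos hx1'
  have hlogX : 0 < Real.log X := Real.log_pos hX1
  have h0b : (0:ℝ) < b := lt_trans one_pos hb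
  have h0X : (0:ℝ) < X := lt_trans one_pos hX1
  have hbx : b ≤ x := le_trans hbX hXx
  -- integrabilities
  have hint_bX : IntervalIntegrable (fun t => β t / t) volume b X :=
    div_inv_intervalIntegrable h0b hbX (hβint X hbX)
  have hint_bx : IntervalIntegrable (fun t => β t / t) volume b x :=
    div_inv_intervalIntegrable h0b hbx (hβint x hbx)
  have hβint_Xx : IntervalIntegrable β volume X x :=
    (hβint x hbx).mono_set (by rw [Set.uIcc_of_le hXx, Set.uIcc_of_le hbx]; exact Set.Icc_subset_Icc hbX le_rfl)
  have hint_Xx : IntervalIntegrable (fun t => β t / t) volume X x :=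
    div_inv_intervalIntegrable h0X hXx hβint_Xx
  have hint_sub : IntervalIntegrable (fun t => (β t - ρ) / t) volume X x := by
    have : IntervalIntegrable (fun t => ρ / t) volume X x :=
      div_inv_intervalIntegrable h0X hXx intervalIntegrable_const
    simpa [sub_div] using hint_Xx.sub this
  have hinv_Xx : IntervalIntegrable (fun t : ℝ => t⁻¹) volume X x := by
    apply ContinuousOn.intervalIntegrable
    apply ContinuousOn.inv₀ continuousOn_id
    intro t ht
    rw [Set.uIcc_of_le hXx] at ht
    exact ne_of_gt (lt_of_lt_of_le h0X ht.1)
  -- split integral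
  have hsplit : (∫ t in b..x, β t / t) = (∫ t in b..X, β t / t) + ∫ t in X..x, β t / t :=
    (intervalIntegral.integral_add_adjacent_intervals hint_bX hint_Xx).symm
  -- ∫_X^x β/t = ∫_X^x (β-ρ)/t + ρ (log x - log X)
  have hinv_val : (∫ t in X..x, t⁻¹) = Real.log x - Real.log X := by
    rw [integral_inv (by rw [Set.uIcc_of_le hXx]; rintro ⟨h1, -⟩; linarith)]
    rw [Real.log_div (by positivity) (by positivity)]
  have hρ_val : (∫ t in X..x, ρ / t) = ρ * (Real.log x - Real.log X) := by
    simp only [div_eq_mul_inv]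
    rw [intervalIntegral.integral_const_mul, hinv_val]
  have hsplit2 : (∫ t in X..x, β t / t) = (∫ t in X..x, (β t - ρ) / t) + ρ * (Real.log x - Real.log X) := by
    rw [← hρ_val, ← intervalIntegral.integral_add hint_sub (div_inv_intervalIntegrable h0X hXx intervalIntegrable_const)]
    congr 1; ext t; ring
  -- bound the error term
  have herr : |∫ t in X..x, (β t - ρ) / t| ≤ δ/2 * Real.log x := by
    calc |∫ t in X..x, (β t - ρ) / t| ≤ ∫ t in X..x, |(β t - ρ) / t| :=
          intervalIntegral.abs_integral_le_integral_abs hXx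
      _ ≤ ∫ t in X..x, (δ/2) * t⁻¹ := by
          apply intervalIntegral.integral_mono_on hXx hint_sub.abs (hinv_Xx.const_mul _)
          intro t ht
          have ht0 : 0 < t := lt_of_lt_of_le h0X ht.1
          rw [abs_div, abs_of_pos ht0, div_eq_mul_inv]
          exact mul_le_mul_of_nonneg_right (hβsmall t ht.1) (by positivity)
      _ = δ/2 * (Real.log x - Real.log X) := by
          rw [intervalIntegral.integral_const_mul, hinv_val]
      _ ≤ δ/2 * Real.log x := by nlinarith
  -- assemble
  have key : |(∫ t in b..x, β t / t) - ρ * Real.log x| ≤ C + δ/2 * Real.log x := by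
    have : (∫ t in b..x, β t / t) - ρ * Real.log x
        = (∫ t in b..X, β t / t) - ρ * Real.log X + ∫ t in X..x, (β t - ρ) / t := by
      rw [hsplit, hsplit2]; ring
    rw [this]
    calc |(∫ t in b..X, β t / t) - ρ * Real.log X + ∫ t in X..x, (β t - ρ) / t|
        ≤ |(∫ t in b..X, β t / t) - ρ * Real.log X| + |∫ t in X..x, (β t - ρ) / t| := abs_add_le _ _
      _ ≤ C + δ/2 * Real.log x := by
          apply add_le_add _ herr
          calc |(∫ t in b..X, β t / t) - ρ * Real.log X|
              ≤ |∫ t in b..X, β t / t| + |ρ * Real.log X| := abs_sub _ _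
            _ = C := by rw [hC, abs_mul, abs_of_pos hlogX]
  have hClog : C < δ/2 * Real.log x := by
    have hC0 : 0 ≤ C := by positivity
    have : Real.exp (C / (δ/2)) < x := lt_of_le_of_lt (le_max_right _ _) hx1
    have hlg : C / (δ/2) < Real.log x := (Real.lt_log_iff_exp_lt (by positivity)).mpr this
    calc C = δ/2 * (C / (δ/2)) := by field_simp
      _ < δ/2 * Real.log x := by apply mul_lt_mul_of_pos_left hlg; positivity
  rw [Real.dist_eq]
  have heq : (∫ t in b..x, β t / t) / Real.log x - ρ = ((∫ t in b..x, β t / t) - ρ * Real.log x) / Real.log x := by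
    field_simp
  rw [heq, abs_div, abs_of_pos hlogx, div_lt_iff₀ hlogx]
  calc |(∫ t in b..x, β t / t) - ρ * Real.log x| ≤ C + δ/2 * Real.log x := key
    _ < δ/2 * Real.log x + δ/2 * Real.log x := by linarith
    _ = δ * Real.log x := by ring

theorem memM_of_karamata_representation (U : ℝ → ℝ) (ρ : ℝ) (b : ℝ) (hb : 1 < b)
    (hpos : ∀ x, 0 < x → 0 < U x) (hmeas : Measurable U)
    (hbdd : ∀ b', 0 < b' → ∃ C, ∀ x, 0 < x → x ≤ b' → U x ≤ C)
    (α β ε : ℝ → ℝ)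
    (hα : Tendsto (fun x => α x / Real.log x) atTop (nhds 0))
    (hε : Tendsto ε atTop (nhds 1))
    (hβ : Tendsto β atTop (nhds ρ))
    (hβint : ∀ x, b ≤ x → IntervalIntegrable β volume b x)
    (hrep : ∀ x, b ≤ x →
      U x = Real.exp (α x + ε x * ∫ t in b..x, β t / t)) :
    MemM U ρ := by
  refine ⟨hpos, hmeas, hbdd, ?_⟩
  have hL := karamata_log_integral hb hβ hβint
  have hlogU : Tendsto (fun x => Real.log (U x) / Real.log x) atTop (nhds ρ) := by
    have h2 : Tendsto (fun x => α x / Real.log x + ε x * ((∫ t in b..x, β t / t) / Real.log x))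
        atTop (nhds (0 + 1 * ρ)) := hα.add (hε.mul hL)
    rw [zero_add, one_mul] at h2
    apply h2.congr'
    filter_upwards [eventually_ge_atTop b, eventually_gt_atTop 1] with x hbx hx1
    rw [hrep x hbx, Real.log_exp]
    have hlx : Real.log x ≠ 0 := ne_of_gt (Real.log_pos hx1)
    field_simp
  intro ε' hε'
  constructor
  · have hfac : Tendsto (fun x => (Real.log (U x) / Real.log x - (ρ + ε')) * Real.log x)
        atTop atBot := by
      apply Tendsto.neg_mul_atTop (C := -ε') (by linarith) _ Real.tendsto_log_atTop
      have := hlogU.sub (tendsto_const_nhds (x := ρ + ε'))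
      simpa using this.congr (fun x => rfl)
    have h3 := Real.tendsto_exp_atBot.comp hfac
    apply h3.congr'
    filter_upwards [eventually_ge_atTop b, eventually_gt_atTop 1] with x hbx hx1
    have hx0 : (0:ℝ) < x := lt_trans one_pos hx1
    have hlx : Real.log x ≠ 0 := ne_of_gt (Real.log_pos hx1)
    have hU : 0 < U x := hpos x hx0
    simp only [Function.comp]
    rw [sub_mul, div_mul_cancel₀ _ hlx, Real.exp_sub, Real.exp_log hU, mul_comm (ρ + ε'),
      ← Real.rpow_def_of_pos hx0]
  · have hfac : Tendsto (fun x => (Real.log (U x) / Real.log x - (ρ - ε')) * Real.log x)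
        atTop atTop := by
      apply Tendsto.pos_mul_atTop (C := ε') hε' _ Real.tendsto_log_atTop
      have := hlogU.sub (tendsto_const_nhds (x := ρ - ε'))
      simpa using this.congr (fun x => rfl)
    have h3 := Real.tendsto_exp_atTop.comp hfac
    apply h3.congr'
    filter_upwards [eventually_ge_atTop b, eventually_gt_atTop 1] with x hbx hx1
    have hx0 : (0:ℝ) < x := lt_trans one_pos hx1
    have hlx : Real.log x ≠ 0 := ne_of_gt (Real.log_pos hx1)
    have hU : 0 < U x := hpos x hx0
    simp only [Function.comp]
    rw [sub_mul, div_mul_cancel₀ _ hlx, Real.exp_sub, Real.exp_log hU, mul_comm (ρ - ε'),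
      ← Real.rpow_def_of_pos hx0]
end

section
/- Representation theorem of Karamata type (direct direction): If U ∈ 𝓜 with finite index ρ_U, then there exist b > 1 and functions α, β, ε with α(x)/log(x) → 0, ε(x) → 1, β(x) → ρ_U as x → ∞, such that U(x) = exp(α(x) + ε(x)·∫_b^x β(t)/t dt) for all x ≥ b. -/
open Filter Real MeasureTheory Set

lemma logU_div_log_tendsto (U : ℝ → ℝ) (ρ : ℝ) (hU : MemM U ρ) :
    Tendsto (fun x => Real.log (U x) / Real.log x) atTop (nhds ρ) := by
  obtain ⟨h0, -, -, hlim⟩ := hU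
  rw [Metric.tendsto_nhds]
  intro δ hδ
  obtain ⟨h1, h2⟩ := hlim (δ / 2) (by linarith)
  have e1 : ∀ᶠ x in atTop, U x / x ^ (ρ + δ / 2) < 1 :=
    h1.eventually_lt_const one_pos
  have e2 : ∀ᶠ x in atTop, (1 : ℝ) ≤ U x / x ^ (ρ - δ / 2) :=
    h2.eventually_ge_atTop 1
  filter_upwards [e1, e2, eventually_gt_atTop 1] with x hx1 hx2 hx
  have hx0 : (0 : ℝ) < x := by linarith
  have hlx : 0 < Real.log x := Real.log_pos hx
  have hUx : 0 < U x := h0 x hx0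
  have hp1 : (0 : ℝ) < x ^ (ρ + δ / 2) := Real.rpow_pos_of_pos hx0 _
  have hp2 : (0 : ℝ) < x ^ (ρ - δ / 2) := Real.rpow_pos_of_pos hx0 _
  have hub : U x < x ^ (ρ + δ / 2) := by
    rw [div_lt_one hp1] at hx1; exact hx1
  have hlb : x ^ (ρ - δ / 2) ≤ U x := by
    rw [le_div_iff₀ hp2, one_mul] at hx2; exact hx2
  have hu : Real.log (U x) < (ρ + δ / 2) * Real.log x := by
    calc Real.log (U x) < Real.log (x ^ (ρ + δ / 2)) := Real.log_lt_log hUx hub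
      _ = (ρ + δ / 2) * Real.log x := Real.log_rpow hx0 _
  have hl : (ρ - δ / 2) * Real.log x ≤ Real.log (U x) := by
    calc (ρ - δ / 2) * Real.log x = Real.log (x ^ (ρ - δ / 2)) := (Real.log_rpow hx0 _).symm
      _ ≤ Real.log (U x) := Real.log_le_log hp2 hlb
  have hq1 : Real.log (U x) / Real.log x < ρ + δ / 2 := (div_lt_iff₀ hlx).mpr hu
  have hq2 : ρ - δ / 2 ≤ Real.log (U x) / Real.log x := (le_div_iff₀ hlx).mpr hl
  rw [Real.dist_eq, abs_sub_lt_iff]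
  constructor <;> linarith

theorem karamata_representation_of_memM (U : ℝ → ℝ) (ρ : ℝ) (hU : MemM U ρ) :
    ∃ b : ℝ, 1 < b ∧ ∃ α β ε : ℝ → ℝ,
      Tendsto (fun x => α x / Real.log x) atTop (nhds 0) ∧
      Tendsto ε atTop (nhds 1) ∧
      Tendsto β atTop (nhds ρ) ∧
      ∀ x, b ≤ x → U x = Real.exp (α x + ε x * ∫ t in b..x, β t / t) := by
  refine ⟨2, one_lt_two, fun x => Real.log (U x) - ρ * (Real.log x - Real.log 2),
    fun _ => ρ, fun _ => 1, ?_, tendsto_const_nhds, tendsto_const_nhds, ?_⟩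
  · have h1 := logU_div_log_tendsto U ρ hU
    have h2 : Tendsto (fun x : ℝ => ρ * Real.log 2 * (Real.log x)⁻¹) atTop (nhds 0) := by
      simpa using (Real.tendsto_log_atTop.inv_tendsto_atTop).const_mul (ρ * Real.log 2)
    have := (h1.sub_const ρ).add h2
    rw [sub_self, add_zero] at this
    refine this.congr' ?_
    filter_upwards [eventually_gt_atTop 1] with x hx
    have hlx : Real.log x ≠ 0 := ne_of_gt (Real.log_pos hx)
    field_simp
    ring
  · intro x hx
    have hx0 : (0 : ℝ) < x := by linarith
    have hUx : 0 < U x := hU.1 x hx0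
    have hint : (∫ t in (2:ℝ)..x, ρ / t) = ρ * (Real.log x - Real.log 2) := by
      have h0 : (0:ℝ) ∉ Set.uIcc 2 x := by
        rw [Set.uIcc_of_le (by linarith)]
        intro h
        exact absurd h.1 (by norm_num)
      have : (∫ t in (2:ℝ)..x, ρ / t) = ρ * ∫ t in (2:ℝ)..x, 1 / t := by
        rw [← intervalIntegral.integral_const_mul]
        congr 1; funext t; ring
      rw [this, integral_one_div h0, Real.log_div (by linarith) (by norm_num)]
    rw [hint, one_mul, sub_add_cancel, Real.exp_log hUx]
end

section
/- First characterization of 𝓜_∞: Let U : (0,∞) → (0,∞) be measurable and bounded on finite intervals. Then (for all ρ ∈ ℝ, lim_{x→∞} U(x)/x^ρ = 0) if and only if lim_{x→∞} log(U(x))/log(x) = -∞. -/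
open Filter Real MeasureTheory Set

theorem memMinfty_iff_log_limit (U : ℝ → ℝ)
    (hpos : ∀ x, 0 < x → 0 < U x) (hmeas : Measurable U)
    (hbdd : ∀ b, 0 < b → ∃ C, ∀ x, 0 < x → x ≤ b → U x ≤ C) :
    (∀ ρ : ℝ, Tendsto (fun x => U x / x ^ ρ) atTop (nhds 0)) ↔
      Tendsto (fun x => Real.log (U x) / Real.log x) atTop atBot := by
  constructor
  · intro h
    rw [tendsto_atBot]
    intro M
    have h1 : ∀ᶠ x in atTop, U x / x ^ M < 1 :=
      (h M).eventually_lt_const one_pos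
    filter_upwards [h1, eventually_ge_atTop (3 : ℝ)] with x hx hx3
    have hx0 : (0 : ℝ) < x := by linarith
    have hx1 : (1 : ℝ) < x := by linarith
    have hxM : (0 : ℝ) < x ^ M := Real.rpow_pos_of_pos hx0 M
    have hUx : U x < x ^ M := (div_lt_one hxM).mp hx
    have hlog : Real.log (U x) < M * Real.log x := by
      have := Real.log_lt_log (hpos x hx0) hUx
      rwa [Real.log_rpow hx0] at this
    have hlx : 0 < Real.log x := Real.log_pos hx1
    exact le_of_lt ((div_lt_iff₀ hlx).mpr hlog)
  · intro h ρ
    have h1 : ∀ᶠ x in atTop, Real.log (U x) / Real.log x ≤ ρ - 1 :=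
      h.eventually_le_atBot (ρ - 1)
    have hbound : ∀ᶠ x in atTop, U x / x ^ ρ ≤ x ^ (-1 : ℝ) := by
      filter_upwards [h1, eventually_ge_atTop (3 : ℝ)] with x hx hx3
      have hx0 : (0 : ℝ) < x := by linarith
      have hx1 : (1 : ℝ) < x := by linarith
      have hlx : 0 < Real.log x := Real.log_pos hx1
      have hlog : Real.log (U x) ≤ (ρ - 1) * Real.log x := (div_le_iff₀ hlx).mp hx
      have hU : U x ≤ x ^ (ρ - 1) := by
        have := Real.exp_le_exp.mpr hlog
        rwa [Real.exp_log (hpos x hx0), ← Real.log_rpow hx0,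
          Real.exp_log (Real.rpow_pos_of_pos hx0 _)] at this
      calc U x / x ^ ρ ≤ x ^ (ρ - 1) / x ^ ρ := by
            gcongr
        _ = x ^ (-1 : ℝ) := by
            rw [← Real.rpow_sub hx0]; ring_nf
    have hpos' : ∀ᶠ x in atTop, 0 ≤ U x / x ^ ρ := by
      filter_upwards [eventually_gt_atTop (0 : ℝ)] with x hx0
      exact div_nonneg (hpos x hx0).le (Real.rpow_pos_of_pos hx0 ρ).le
    have hlim : Tendsto (fun x : ℝ => x ^ (-1 : ℝ)) atTop (nhds 0) :=
      tendsto_rpow_neg_atTop one_pos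
    exact tendsto_of_tendsto_of_tendsto_of_le_of_le' tendsto_const_nhds hlim hpos' hbound
end

section
/- Generalized Karamata integral lemma (part ii): Let U ∈ 𝓜 with finite 𝓜-index κ_U, let b > 0 and r ∈ ℝ with r + 1 < κ_U. Then W_r(x) := ∫_x^∞ y^r U(y) dy is finite for x ≥ b and belongs to 𝓜 with 𝓜-index κ_{W_r} = κ_U - (r+1). -/
open Filter Real MeasureTheory Set

theorem karamata_lemma_ii (U : ℝ → ℝ) (κ : ℝ) (hU : MemM U (-κ))
    (b r : ℝ) (hb : 0 < b) (hr : r + 1 < κ) :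
    (∀ x, b ≤ x → IntegrableOn (fun y => y ^ r * U y) (Set.Ioi x)) ∧
    MemM (fun x => if x < b then 1 else ∫ y in Set.Ioi x, y ^ r * U y)
      (-(κ - (r + 1))) := by
  obtain ⟨hpos, hmeas, hbdd, hlim⟩ := hU
  set f : ℝ → ℝ := fun y => y ^ r * U y with hfdef
  have hfmeas : Measurable f := by
    have h1 : Measurable (fun y : ℝ => y ^ r) := by fun_prop
    exact h1.mul hmeas
  have hfpos : ∀ y : ℝ, 0 < y → 0 < f y := fun y hy =>
    mul_pos (rpow_pos_of_pos hy r) (hpos y hy)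
  -- eventual upper bound for U
  have hub : ∀ δ : ℝ, 0 < δ → ∀ᶠ y in atTop, U y ≤ y ^ (-κ + δ) := by
    intro δ hδ
    have h0 := (hlim δ hδ).1
    have h1 : ∀ᶠ y in atTop, U y / y ^ (-κ + δ) < 1 :=
      h0.eventually_lt_const one_pos
    filter_upwards [h1, eventually_gt_atTop 0] with y hy1 hy0
    have hyp : (0:ℝ) < y ^ (-κ + δ) := rpow_pos_of_pos hy0 _
    exact ((div_lt_one hyp).1 hy1).le
  -- eventual lower bound for U
  have hlb : ∀ δ : ℝ, 0 < δ → ∀ᶠ y in atTop, y ^ (-κ - δ) ≤ U y := by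
    intro δ hδ
    have h0 := (hlim δ hδ).2
    have h1 : ∀ᶠ y in atTop, 1 ≤ U y / y ^ (-κ - δ) := h0.eventually_ge_atTop 1
    filter_upwards [h1, eventually_gt_atTop 0] with y hy1 hy0
    have hyp : (0:ℝ) < y ^ (-κ - δ) := rpow_pos_of_pos hy0 _
    exact (one_le_div hyp).1 hy1
  -- integrability on Ioi x for all x > 0
  have key_int : ∀ x : ℝ, 0 < x → IntegrableOn f (Set.Ioi x) := by
    intro x hx
    set δ0 : ℝ := (κ - (r + 1)) / 2 with hδ0def
    have hδ0 : 0 < δ0 := by simp only [hδ0def]; linarith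
    have ha : r + (-κ + δ0) < -1 := by simp only [hδ0def]; linarith
    obtain ⟨A0, hA0⟩ := eventually_atTop.1 (hub δ0 hδ0)
    set A : ℝ := max A0 (max x 1) with hAdef
    have hA0le : A0 ≤ A := le_max_left _ _
    have hxA : x ≤ A := le_trans (le_max_left _ _) (le_max_right _ _)
    have hApos : 0 < A := lt_of_lt_of_le hx hxA
    have hIA : IntegrableOn f (Set.Ioi A) := by
      have hint : IntegrableOn (fun y => y ^ (r + (-κ + δ0))) (Set.Ioi A) :=
        integrableOn_Ioi_rpow_of_lt ha hApos
      refine MeasureTheory.Integrable.mono hint hfmeas.aestronglyMeasurable ?_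
      refine (ae_restrict_iff' measurableSet_Ioi).2 (ae_of_all _ fun y hy => ?_)
      have hy0 : 0 < y := lt_trans hApos hy
      have hfy : 0 ≤ f y := (hfpos y hy0).le
      rw [Real.norm_eq_abs, Real.norm_eq_abs, abs_of_nonneg hfy,
        abs_of_nonneg (rpow_nonneg hy0.le _), Real.rpow_add hy0]
      exact mul_le_mul_of_nonneg_left (hA0 y (le_of_lt (lt_of_le_of_lt hA0le hy)))
        (rpow_nonneg hy0.le _)
    obtain ⟨C, hC⟩ := hbdd A hApos
    have hIxA : IntegrableOn f (Set.Ioc x A) := by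
      refine Measure.integrableOn_of_bounded (M := max (x ^ r) (A ^ r) * C)
        measure_Ioc_lt_top.ne hfmeas.aestronglyMeasurable ?_
      refine (ae_restrict_iff' measurableSet_Ioc).2 (ae_of_all _ fun y hy => ?_)
      have hy0 : 0 < y := lt_trans hx hy.1
      have hCpos : 0 < C := lt_of_lt_of_le (hpos A hApos) (hC A hApos le_rfl)
      have hyr : y ^ r ≤ max (x ^ r) (A ^ r) := by
        rcases le_or_gt 0 r with h | h
        · exact le_trans (rpow_le_rpow hy0.le hy.2 h) (le_max_right _ _)
        · exact le_trans (rpow_le_rpow_of_nonpos hx hy.1.le h.le) (le_max_left _ _)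
      rw [Real.norm_eq_abs, abs_of_nonneg (hfpos y hy0).le]
      exact mul_le_mul hyr (hC y hy0 hy.2) (hpos y hy0).le
        (le_trans (rpow_nonneg hy0.le r) hyr)
    have := hIxA.union hIA
    rwa [Set.Ioc_union_Ioi_eq_Ioi hxA] at this
  have hfnonneg : ∀ x : ℝ, 0 < x → 0 ≤ᵐ[volume.restrict (Set.Ioi x)] f := fun x hx =>
    (ae_restrict_iff' measurableSet_Ioi).2
      (ae_of_all _ fun y hy => (hfpos y (lt_trans hx hy)).le)
  -- positivity of the integral
  have hWpos : ∀ x : ℝ, 0 < x → 0 < ∫ y in Set.Ioi x, f y := by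
    intro x hx
    rw [setIntegral_pos_iff_support_of_nonneg_ae (hfnonneg x hx) (key_int x hx)]
    have hsub : Set.Ioi x ⊆ Function.support f ∩ Set.Ioi x := fun y hy =>
      ⟨ne_of_gt (hfpos y (lt_trans hx hy)), hy⟩
    refine lt_of_lt_of_le ?_ (measure_mono hsub)
    simp [Real.volume_Ioi]
  -- antitonicity of the integral
  have hWanti : ∀ x1 x2 : ℝ, 0 < x1 → x1 ≤ x2 →
      (∫ y in Set.Ioi x2, f y) ≤ ∫ y in Set.Ioi x1, f y := fun x1 x2 h1 h12 =>
    setIntegral_mono_set (key_int x1 h1) (hfnonneg x1 h1)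
      (HasSubset.Subset.eventuallyLE (Set.Ioi_subset_Ioi h12))
  -- upper asymptotic bound
  have hWub : ∀ δ : ℝ, 0 < δ → δ < κ - (r + 1) → ∀ᶠ x in atTop,
      (∫ y in Set.Ioi x, f y) ≤ x ^ (r + (-κ + δ) + 1) / (κ - r - δ - 1) := by
    intro δ hδ hδ2
    have ha : r + (-κ + δ) < -1 := by linarith
    obtain ⟨A, hA⟩ := eventually_atTop.1 (hub δ hδ)
    filter_upwards [eventually_ge_atTop (max A 1)] with x hx
    have hx0 : (0:ℝ) < x := lt_of_lt_of_le one_pos (le_trans (le_max_right _ _) hx)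
    have hAx : A ≤ x := le_trans (le_max_left _ _) hx
    have step : (∫ y in Set.Ioi x, f y) ≤ ∫ y in Set.Ioi x, y ^ (r + (-κ + δ)) := by
      refine setIntegral_mono_on (key_int x hx0)
        (integrableOn_Ioi_rpow_of_lt ha hx0) measurableSet_Ioi fun y hy => ?_
      have hy0 : 0 < y := lt_trans hx0 hy
      rw [Real.rpow_add hy0]
      exact mul_le_mul_of_nonneg_left (hA y (le_of_lt (lt_of_le_of_lt hAx hy)))
        (rpow_nonneg hy0.le _)
    refine step.trans_eq ?_
    rw [integral_Ioi_rpow_of_lt ha hx0]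
    rw [show (κ - r - δ - 1 : ℝ) = -(r + (-κ + δ) + 1) by ring, div_neg, neg_div]
  -- lower asymptotic bound
  have hWlb : ∀ δ : ℝ, 0 < δ → ∀ᶠ x in atTop,
      x ^ (r + (-κ - δ) + 1) / (κ - r + δ - 1) ≤ ∫ y in Set.Ioi x, f y := by
    intro δ hδ
    have ha : r + (-κ - δ) < -1 := by linarith
    obtain ⟨A, hA⟩ := eventually_atTop.1 (hlb δ hδ)
    filter_upwards [eventually_ge_atTop (max A 1)] with x hx
    have hx0 : (0:ℝ) < x := lt_of_lt_of_le one_pos (le_trans (le_max_right _ _) hx)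
    have hAx : A ≤ x := le_trans (le_max_left _ _) hx
    have step : (∫ y in Set.Ioi x, y ^ (r + (-κ - δ))) ≤ ∫ y in Set.Ioi x, f y := by
      refine setIntegral_mono_on (integrableOn_Ioi_rpow_of_lt ha hx0)
        (key_int x hx0) measurableSet_Ioi fun y hy => ?_
      have hy0 : 0 < y := lt_trans hx0 hy
      rw [Real.rpow_add hy0]
      exact mul_le_mul_of_nonneg_left (hA y (le_of_lt (lt_of_le_of_lt hAx hy)))
        (rpow_nonneg hy0.le _)
    refine le_trans (le_of_eq ?_) step
    rw [integral_Ioi_rpow_of_lt ha hx0]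
    rw [show (κ - r + δ - 1 : ℝ) = -(r + (-κ - δ) + 1) by ring, div_neg, neg_div]
  constructor
  · exact fun x hx => key_int x (lt_of_lt_of_le hb hx)
  set W : ℝ → ℝ := fun x => if x < b then 1 else ∫ y in Set.Ioi x, f y with hWdef
  have hWeq : ∀ x : ℝ, b ≤ x → W x = ∫ y in Set.Ioi x, f y := by
    intro x hx; simp only [hWdef, if_neg (not_lt.2 hx)]
  refine ⟨?_, ?_, ?_, ?_⟩
  · -- positivity
    intro x hx
    by_cases h : x < b
    · simp only [hWdef, if_pos h]; norm_num
    · simp only [hWdef, if_neg h]; exact hWpos x hx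
  · -- measurability
    have hg_anti : Antitone (fun x => ∫ y in Set.Ioi (max x b), f y) := by
      intro x1 x2 h
      exact hWanti (max x1 b) (max x2 b) (lt_of_lt_of_le hb (le_max_right _ _))
        (max_le_max h le_rfl)
    have hgmeas : Measurable (fun x => ∫ y in Set.Ioi (max x b), f y) :=
      hg_anti.measurable
    have heq : (fun x => if x < b then 1 else ∫ y in Set.Ioi x, f y) =
        fun x => if x < b then 1 else ∫ y in Set.Ioi (max x b), f y := by
      funext x
      by_cases h : x < b
      · simp [h]
      · rw [if_neg h, if_neg h, max_eq_left (not_lt.1 h)]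
    rw [hWdef, heq]
    exact Measurable.ite (measurableSet_Iio (a := b)) measurable_const hgmeas
  · -- boundedness on finite intervals
    intro B hB
    refine ⟨max 1 (∫ y in Set.Ioi b, f y), fun x hx0 hxB => ?_⟩
    by_cases h : x < b
    · simp only [hWdef, if_pos h]; exact le_max_left _ _
    · simp only [hWdef, if_neg h]
      exact le_trans (hWanti b x hb (not_lt.1 h)) (le_max_right _ _)
  · -- the two limits
    intro ε hε
    constructor
    · -- upper limit : tendsto 0
      set δ : ℝ := min (ε / 2) ((κ - (r + 1)) / 2) with hδdef
      have hδpos : 0 < δ := lt_min (by linarith) (by linarith)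
      have hδ2 : δ < κ - (r + 1) := lt_of_le_of_lt (min_le_right _ _) (by linarith)
      have hδε : δ < ε := lt_of_le_of_lt (min_le_left _ _) (by linarith)
      have hc1 : 0 < κ - r - δ - 1 := by linarith
      have hhl : Tendsto (fun x : ℝ => x ^ (δ - ε) / (κ - r - δ - 1)) atTop (nhds 0) := by
        have := (tendsto_rpow_neg_atTop (y := ε - δ) (by linarith)).div_const (κ - r - δ - 1)
        simpa [neg_sub, zero_div] using this
      refine tendsto_of_tendsto_of_tendsto_of_le_of_le' tendsto_const_nhds hhl ?_ ?_
      · filter_upwards [eventually_ge_atTop (max b 1)] with x hx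
        have hx0 : (0:ℝ) < x := lt_of_lt_of_le one_pos (le_trans (le_max_right _ _) hx)
        have hxb : b ≤ x := le_trans (le_max_left _ _) hx
        simp only [hWdef, if_neg (not_lt.2 hxb)]
        exact div_nonneg (hWpos x hx0).le (rpow_pos_of_pos hx0 _).le
      · filter_upwards [hWub δ hδpos hδ2, eventually_ge_atTop (max b 1)] with x hxu hx
        have hx0 : (0:ℝ) < x := lt_of_lt_of_le one_pos (le_trans (le_max_right _ _) hx)
        have hxb : b ≤ x := le_trans (le_max_left _ _) hx
        simp only [hWdef, if_neg (not_lt.2 hxb)]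
        have hxp : (0:ℝ) < x ^ (-(κ - (r + 1)) + ε) := rpow_pos_of_pos hx0 _
        rw [div_le_div_iff₀ hxp hc1]
        calc (∫ y in Set.Ioi x, f y) * (κ - r - δ - 1)
            ≤ x ^ (r + (-κ + δ) + 1) / (κ - r - δ - 1) * (κ - r - δ - 1) := by
              exact mul_le_mul_of_nonneg_right hxu hc1.le
          _ = x ^ (r + (-κ + δ) + 1) := by field_simp
          _ = x ^ (δ - ε) * x ^ (-(κ - (r + 1)) + ε) := by
              rw [← Real.rpow_add hx0]; congr 1; ring
      done
    · -- lower limit : tendsto atTop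
      set δ : ℝ := ε / 2 with hδdef
      have hδpos : 0 < δ := by linarith
      have hc2 : 0 < κ - r + δ - 1 := by linarith
      have hhl : Tendsto (fun x : ℝ => x ^ (ε - δ) / (κ - r + δ - 1)) atTop atTop :=
        (tendsto_rpow_atTop (by linarith : (0:ℝ) < ε - δ)).atTop_div_const hc2
      refine tendsto_atTop_mono' atTop ?_ hhl
      filter_upwards [hWlb δ hδpos, eventually_ge_atTop (max b 1)] with x hxl hx
      have hx0 : (0:ℝ) < x := lt_of_lt_of_le one_pos (le_trans (le_max_right _ _) hx)
      have hxb : b ≤ x := le_trans (le_max_left _ _) hx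
      simp only [hWdef, if_neg (not_lt.2 hxb)]
      have hxp : (0:ℝ) < x ^ (-(κ - (r + 1)) - ε) := rpow_pos_of_pos hx0 _
      rw [div_le_div_iff₀ hc2 hxp]
      calc x ^ (ε - δ) * x ^ (-(κ - (r + 1)) - ε)
          = x ^ (r + (-κ - δ) + 1) := by rw [← Real.rpow_add hx0]; congr 1; ring
        _ = x ^ (r + (-κ - δ) + 1) / (κ - r + δ - 1) * (κ - r + δ - 1) := by field_simp
        _ ≤ (∫ y in Set.Ioi x, f y) * (κ - r + δ - 1) :=
            mul_le_mul_of_nonneg_right hxl hc2.le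
end

section
/- Abelian part of the extended Karamata Tauberian theorem: Let U : (0,∞) → (0,∞) be continuous with U(0+) = 0 and of locally bounded variation, and suppose U ∈ 𝓜 with 𝓜-index -α where α > 0 (i.e., lim_{x→∞} log U(x)/log x = α). Define Û(s) := s ∫_0^∞ e^{-xs} U(x) dx for s > 0. Then lim_{s→∞} log(Û(1/s))/log(s) = α, i.e., s ↦ Û(1/s) belongs to 𝓜 with 𝓜-index -α. -/
open Filter Real MeasureTheory Set

/-!
Write `U(x) = x^(α ± o(1))` at infinity. The contribution of `x ∈ (s, 2s]` bounds
`Û(1/s) = s⁻¹ ∫₀^∞ e^(-x/s) U(x) dx` below by `e⁻² s^(α-ε)`. Continuity and `U(0+) = 0`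
bound `U` on compacts, so `U(x) ≤ C + x^(α+ε)` on all of `(0,∞)`, and the Gamma integral
bounds `Û(1/s)` above by `C + Γ(α+ε+1) s^(α+ε)`. Taking logarithms, `log Û(1/s) / log s`
lies between `α - ε + o(1)` and `α + ε + o(1)`.
-/

open scoped Topology

lemma integrableOn_exp_mul_rpow {r p : ℝ} (hr : 0 < r) (hp : -1 < p) :
    IntegrableOn (fun x => exp (-(x * r)) * x ^ p) (Ioi 0) := by
  refine (integrableOn_rpow_mul_exp_neg_mul_rpow hp one_pos hr).congr_fun
    (fun x _ => ?_) measurableSet_Ioi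
  simp only [rpow_one, neg_mul, mul_comm r, mul_comm (x ^ p)]

lemma integral_exp_mul_rpow {r p : ℝ} (hr : 0 < r) (hp : -1 < p) :
    ∫ x in Ioi 0, exp (-(x * r)) * x ^ p = (1 / r) ^ (p + 1) * Gamma (p + 1) := by
  rw [← integral_rpow_mul_exp_neg_mul_Ioi (by linarith) hr]
  simp only [add_sub_cancel_right, mul_comm]

lemma exp_mul_const_add_rpow_eq (C r p : ℝ) :
    (fun x => exp (-(x * r)) * (C + x ^ p))
      = fun x => C * (exp (-(x * r)) * x ^ (0 : ℝ)) + exp (-(x * r)) * x ^ p := by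
  ext x
  rw [rpow_zero]
  ring

lemma integrableOn_exp_mul_const_add_rpow (C : ℝ) {r p : ℝ} (hr : 0 < r) (hp : -1 < p) :
    IntegrableOn (fun x => exp (-(x * r)) * (C + x ^ p)) (Ioi 0) := by
  rw [exp_mul_const_add_rpow_eq]
  exact ((integrableOn_exp_mul_rpow hr (by norm_num)).const_mul C).add
    (integrableOn_exp_mul_rpow hr hp)

lemma integral_exp_mul_const_add_rpow (C : ℝ) {r p : ℝ} (hr : 0 < r) (hp : -1 < p) :
    ∫ x in Ioi 0, exp (-(x * r)) * (C + x ^ p) = C / r + (1 / r) ^ (p + 1) * Gamma (p + 1) := by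
  rw [exp_mul_const_add_rpow_eq,
    integral_add ((integrableOn_exp_mul_rpow hr (by norm_num)).const_mul C)
      (integrableOn_exp_mul_rpow hr hp),
    integral_const_mul, integral_exp_mul_rpow hr (by norm_num), integral_exp_mul_rpow hr hp]
  simp only [zero_add, rpow_one, Gamma_one, mul_one, div_eq_mul_one_div C]

-- By parts, `U(0+) = 0` turns `∫₀^∞ e^{-xs} dU(x)` into this form.
noncomputable def laplaceStieltjes (U : ℝ → ℝ) (s : ℝ) : ℝ :=
  s * ∫ x in Ioi 0, exp (-(x * s)) * U x

section LaplaceBounds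

variable {U : ℝ → ℝ} {C p r : ℝ}

lemma integrableOn_exp_mul_of_le_const_add_rpow
    (hmeas : AEStronglyMeasurable U (volume.restrict (Ioi 0)))
    (hnonneg : ∀ x > 0, 0 ≤ U x) (hle : ∀ x > 0, U x ≤ C + x ^ p)
    (hr : 0 < r) (hp : -1 < p) :
    IntegrableOn (fun x => exp (-(x * r)) * U x) (Ioi 0) := by
  refine (integrableOn_exp_mul_const_add_rpow C hr hp).mono'
    ((by fun_prop : Continuous fun x => exp (-(x * r))).aestronglyMeasurable.mul hmeas) ?_
  filter_upwards [ae_restrict_mem measurableSet_Ioi] with x hx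
  rw [norm_mul, norm_of_nonneg (exp_pos _).le, norm_of_nonneg (hnonneg x hx)]
  exact mul_le_mul_of_nonneg_left (hle x hx) (exp_pos _).le

lemma laplaceStieltjes_le_const_add_rpow
    (hmeas : AEStronglyMeasurable U (volume.restrict (Ioi 0)))
    (hnonneg : ∀ x > 0, 0 ≤ U x) (hle : ∀ x > 0, U x ≤ C + x ^ p)
    (hr : 0 < r) (hp : -1 < p) :
    laplaceStieltjes U r ≤ C + (1 / r) ^ p * Gamma (p + 1) := by
  have hint : ∫ x in Ioi 0, exp (-(x * r)) * U x
      ≤ ∫ x in Ioi 0, exp (-(x * r)) * (C + x ^ p) :=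
    setIntegral_mono_on (integrableOn_exp_mul_of_le_const_add_rpow hmeas hnonneg hle hr hp)
      (integrableOn_exp_mul_const_add_rpow C hr hp) measurableSet_Ioi
      fun x hx => mul_le_mul_of_nonneg_left (hle x hx) (exp_pos _).le
  rw [integral_exp_mul_const_add_rpow C hr hp] at hint
  calc laplaceStieltjes U r ≤ r * (C / r + (1 / r) ^ (p + 1) * Gamma (p + 1)) :=
        mul_le_mul_of_nonneg_left hint hr.le
    _ = C + (1 / r) ^ p * Gamma (p + 1) := by
        rw [rpow_add_one (by positivity)]
        field_simp

lemma exp_neg_two_mul_le_laplaceStieltjes {m : ℝ}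
    (hint : IntegrableOn (fun x => exp (-(x * r)) * U x) (Ioi 0))
    (hnonneg : ∀ x > 0, 0 ≤ U x) (hr : 0 < r) (hm : 0 ≤ m)
    (hle : ∀ x ∈ Ioc (1 / r) (2 / r), m ≤ U x) :
    exp (-2) * m ≤ laplaceStieltjes U r := by
  have hsub : Ioc (1 / r) (2 / r) ⊆ Ioi 0 := fun x hx => lt_trans (by positivity) hx.1
  have hlocal : ∫ _ in Ioc (1 / r) (2 / r), exp (-2) * m
      ≤ ∫ x in Ioc (1 / r) (2 / r), exp (-(x * r)) * U x := by
    refine setIntegral_mono_on (integrableOn_const measure_Ioc_lt_top.ne) (hint.mono_set hsub)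
      measurableSet_Ioc fun x hx => mul_le_mul ?_ (hle x hx) hm (exp_pos _).le
    have : x * r ≤ 2 := (le_div_iff₀ hr).1 hx.2
    exact exp_le_exp.2 (by linarith)
  have hglobal : ∫ x in Ioc (1 / r) (2 / r), exp (-(x * r)) * U x
      ≤ ∫ x in Ioi 0, exp (-(x * r)) * U x :=
    setIntegral_mono_set hint
      (ae_restrict_of_forall_mem measurableSet_Ioi fun x hx =>
        mul_nonneg (exp_pos _).le (hnonneg x hx))
      hsub.eventuallyLE
  rw [setIntegral_const, volume_real_Ioc_of_le (by gcongr; norm_num), smul_eq_mul] at hlocal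
  calc exp (-2) * m = r * ((2 / r - 1 / r) * (exp (-2) * m)) := by field_simp; ring
    _ ≤ laplaceStieltjes U r := mul_le_mul_of_nonneg_left (hlocal.trans hglobal) hr.le

end LaplaceBounds

lemma exists_le_const_add_of_eventually_le {U g : ℝ → ℝ} (hcont : ContinuousOn U (Ioi 0))
    (hzero : IsBoundedUnder (· ≤ ·) (𝓝[>] 0) U) (htop : U ≤ᶠ[atTop] g)
    (hg : ∀ x > 0, 0 ≤ g x) : ∃ C, 0 ≤ C ∧ ∀ x > 0, U x ≤ C + g x := by
  obtain ⟨B, hB⟩ := hzero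
  obtain ⟨a, ha, hBa⟩ := mem_nhdsGT_iff_exists_Ioo_subset.1 (eventually_map.1 hB)
  obtain ⟨X, hX⟩ := eventually_atTop.1 htop
  obtain ⟨M, hM⟩ := isCompact_Icc.bddAbove_image
    (hcont.mono fun x (hx : x ∈ Icc a X) => lt_of_lt_of_le ha hx.1)
  refine ⟨max (max B M) 0, le_max_right _ _, fun x hx => ?_⟩
  have hC : B ≤ max (max B M) 0 ∧ M ≤ max (max B M) 0 :=
    ⟨(le_max_left _ _).trans (le_max_left _ _), (le_max_right _ _).trans (le_max_left _ _)⟩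
  have hgx := hg x hx
  rcases lt_or_ge x a with hxa | hxa
  · linarith [show U x ≤ B from hBa ⟨hx, hxa⟩]
  rcases le_or_gt X x with hXx | hXx
  · linarith [hX x hXx, le_max_right (max B M) 0]
  · linarith [hM ⟨x, ⟨hxa, hXx.le⟩, rfl⟩]

lemma eventually_rpow_le_and_le_rpow_of_tendsto_log_div_log {U : ℝ → ℝ} {α ε : ℝ}
    (hpos : ∀ᶠ x in atTop, 0 < U x)
    (hlog : Tendsto (fun x => log (U x) / log x) atTop (𝓝 α)) (hε : 0 < ε) :
    ∀ᶠ x in atTop, x ^ (α - ε) ≤ U x ∧ U x ≤ x ^ (α + ε) := by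
  filter_upwards [hpos, eventually_gt_atTop 1, hlog.eventually (Ioo_mem_nhds (by linarith :
    α - ε < α) (by linarith : α < α + ε))] with x hUx hx ⟨hlo, hhi⟩
  have hlx : 0 < log x := log_pos hx
  have hx0 : 0 < x := by linarith
  rw [lt_div_iff₀ hlx] at hlo
  rw [div_lt_iff₀ hlx] at hhi
  exact ⟨(rpow_le_iff_le_log hx0 hUx).2 hlo.le,
    (le_rpow_iff_log_le hUx hx0).2 hhi.le⟩

lemma tendsto_log_div_log_of_rpow_bounds {f : ℝ → ℝ} {α : ℝ}
    (h : ∀ᶠ ε in 𝓝[>] 0, ∃ c > 0, ∃ C > 0,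
      ∀ᶠ s in atTop, c * s ^ (α - ε) ≤ f s ∧ f s ≤ C * s ^ (α + ε)) :
    Tendsto (fun s => log (f s) / log s) atTop (𝓝 α) := by
  rw [Metric.tendsto_nhds]
  intro δ hδ
  obtain ⟨ε, ⟨c, hc, C, hC, hbounds⟩, hε, hεδ⟩ :=
    (h.and (Ioo_mem_nhdsGT (half_pos hδ))).exists
  have hvanish (K : ℝ) : ∀ᶠ s in atTop, K / log s ∈ Ioo (-(δ / 2)) (δ / 2) :=
    (tendsto_const_nhds.div_atTop tendsto_log_atTop).eventually
      (Ioo_mem_nhds (by linarith) (by linarith))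
  filter_upwards [hbounds, hvanish (log c), hvanish (log C), eventually_gt_atTop 1]
    with s ⟨hlo, hhi⟩ ⟨hc₁, hc₂⟩ ⟨hC₁, hC₂⟩ hs
  have hls : 0 < log s := log_pos hs
  have hs0 : 0 < s := by linarith
  have hfs : 0 < f s := lt_of_lt_of_le (by positivity) hlo
  have hlog_lo : log c / log s + (α - ε) ≤ log (f s) / log s := by
    rw [div_add' _ _ _ hls.ne', div_le_div_iff_of_pos_right hls,
      ← log_rpow hs0, ← log_mul hc.ne' (by positivity)]
    exact log_le_log (by positivity) hlo
  have hlog_hi : log (f s) / log s ≤ log C / log s + (α + ε) := by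
    rw [div_add' _ _ _ hls.ne', div_le_div_iff_of_pos_right hls,
      ← log_rpow hs0, ← log_mul hC.ne' (by positivity)]
    exact log_le_log hfs hhi
  rw [Real.dist_eq, abs_sub_lt_iff]
  constructor <;> linarith

theorem abelian_karamata_tauberian_general (U : ℝ → ℝ) (α : ℝ) (hα : 0 < α)
    (hpos : ∀ x, 0 < x → 0 < U x)
    (hcont : ContinuousOn U (Set.Ioi 0))
    (h0 : Tendsto U (nhdsWithin 0 (Set.Ioi 0)) (nhds 0))
    (hlog : Tendsto (fun x => Real.log (U x) / Real.log x) atTop (nhds α)) :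
    Tendsto
      (fun s => Real.log ((1 / s) * ∫ x in Set.Ioi (0 : ℝ), Real.exp (-(x * (1 / s))) * U x)
        / Real.log s) atTop (nhds α) := by
  have hnonneg : ∀ x > 0, 0 ≤ U x := fun x hx => (hpos x hx).le
  have hmeas : AEStronglyMeasurable U (volume.restrict (Ioi 0)) :=
    hcont.aestronglyMeasurable measurableSet_Ioi
  refine tendsto_log_div_log_of_rpow_bounds (f := fun s => laplaceStieltjes U (1 / s)) ?_
  filter_upwards [Ioo_mem_nhdsGT hα] with ε ⟨hε, hεα⟩
  have hp : -1 < α + ε := by linarith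
  have hbounds := eventually_rpow_le_and_le_rpow_of_tendsto_log_div_log
    ((eventually_gt_atTop 0).mono hpos) hlog hε
  obtain ⟨C, hC, hle⟩ := exists_le_const_add_of_eventually_le hcont h0.isBoundedUnder_le
    (hbounds.mono fun _ hx => hx.2) fun x hx => (rpow_pos_of_pos hx _).le
  obtain ⟨X, hX⟩ := eventually_atTop.1 hbounds
  refine ⟨exp (-2), exp_pos _, C + Gamma (α + ε + 1), by positivity, ?_⟩
  filter_upwards [eventually_ge_atTop X, eventually_ge_atTop 1] with s hsX hs1
  have hr : 0 < 1 / s := by positivity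
  constructor
  · refine exp_neg_two_mul_le_laplaceStieltjes
      (integrableOn_exp_mul_of_le_const_add_rpow hmeas hnonneg hle hr hp) hnonneg hr
      (by positivity) fun x hx => ?_
    rw [one_div_one_div] at hx
    exact (rpow_le_rpow (by linarith) hx.1.le (by linarith)).trans (hX x (hsX.trans hx.1.le)).1
  · have hs_pow : 1 ≤ s ^ (α + ε) := one_le_rpow hs1 (by linarith)
    calc laplaceStieltjes U (1 / s) ≤ C + s ^ (α + ε) * Gamma (α + ε + 1) := by
          simpa using laplaceStieltjes_le_const_add_rpow hmeas hnonneg hle hr hp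
      _ ≤ (C + Gamma (α + ε + 1)) * s ^ (α + ε) := by nlinarith

theorem abelian_karamata_tauberian (U : ℝ → ℝ) (α : ℝ) (hα : 0 < α)
    (hpos : ∀ x, 0 < x → 0 < U x)
    (hcont : ContinuousOn U (Set.Ioi 0))
    (h0 : Tendsto U (nhdsWithin 0 (Set.Ioi 0)) (nhds 0))
    (hBV : LocallyBoundedVariationOn U (Set.Ioi 0))
    (hlog : Tendsto (fun x => Real.log (U x) / Real.log x) atTop (nhds α)) :
    Tendsto
      (fun s => Real.log ((1 / s) * ∫ x in Set.Ioi (0 : ℝ), Real.exp (-(x * (1 / s))) * U x)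
        / Real.log s) atTop (nhds α) :=
  abelian_karamata_tauberian_general U α hα hpos hcont h0 hlog
end
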